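/- arXiv:2507.15552 — 4 statements merged into one kernel-verified Lean document; each statement's English description precedes it below -/
import Mathlib

section
/- Every positive real number x lying in ℤ + [1/2, 1] (i.e. such that 1/2 ≤ x − m ≤ 1 for some integer m) can be represented as a product of two continued fractions all of whose odd-order partial quotients are equal to 1: there exist nonnegative integers a_0, b_0 and (finite or infinite) sequences of positive integers a_2, a_4, a_6, … and b_2, b_4, b_6, … such that x = [a_0; 1, a_2, 1, a_4, 1, a_6, …] · [b_0; 1, b_2, 1, b_4, 1, b_6, …], where in the finite case the expansion terminates after some partial quotient. -/
open Filter Topology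

/-- Value of the finite continued fraction tail `1/(c_1 + 1/(c_2 + ⋯))`. -/
noncomputable def cfTail : List ℕ → ℝ
  | [] => 0
  | c :: l => 1 / (c + cfTail l)

/-- Value of the finite continued fraction `[a_0; c_1, …, c_n]`. -/
noncomputable def cfFin (a0 : ℤ) (l : List ℕ) : ℝ := a0 + cfTail l

/-- `y` is the value of a (finite or infinite) continued fraction with integer part `a0`,
positive integer partial quotients, all of whose odd-order partial quotients equal `1`
(the partial quotient `c_{i+1}` sits at list/sequence index `i`, so odd order means
even index). -/
def IsOddOneCF (a0 : ℤ) (y : ℝ) : Prop :=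
  (∃ l : List ℕ, l ≠ [] ∧ (∀ c ∈ l, 0 < c) ∧
      (∀ i : Fin l.length, (i : ℕ) % 2 = 0 → l.get i = 1) ∧ y = cfFin a0 l) ∨
  (∃ c : ℕ → ℕ, (∀ i, 0 < c i) ∧ (∀ k : ℕ, c (2 * k) = 1) ∧
      Tendsto (fun n => cfFin a0 (List.ofFn fun i : Fin n => c i)) atTop (nhds y))

/-!
Write `y = m + 1 - u` and `z = 1 - v`, where `u = 1/(β₁ - 1/(β₂ - ⋯))` and `v` are minus
continued fractions with all digits `β ≥ 3`. Since `1/(1 + 1/(β - 2 + (1 - t))) = 1 - 1/(β - t)`,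
such a `y` is the continued fraction `[m; 1, β₁ - 2, 1, β₂ - 2, …]`, whose odd-order partial
quotients are `1`. So it suffices to solve `(m + 1 - u)(1 - v) = x`, a zero of the bilinear form
`F(u, v) = a u v + b u + c v + d`. The digits are chosen greedily, alternately for `u` and `v`:
substituting `u = 1/(β - u')` and clearing the denominator gives a bilinear form in `(v, u')`, and
`β = ⌈-b/d⌉` preserves `2d < -b` and `0 ≤ d < 1/2` (this needs `x ≥ 1/2`). Each step divides the
residual `|F|` by `β - u' ≥ 5/2`, so either `d` reaches `0` and finite expansions solve the
equation, or infinite ones do in the limit.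
-/

lemma cfTail_nonneg (l : List ℕ) : 0 ≤ cfTail l := by
  induction l with
  | nil => exact le_rfl
  | cons c l ih => rw [cfTail]; positivity

lemma cfTail_le_one {l : List ℕ} (hl : ∀ c ∈ l, 0 < c) : cfTail l ≤ 1 := by
  cases l with
  | nil => exact zero_le_one
  | cons c l =>
    have hc : (1 : ℝ) ≤ c := by exact_mod_cast hl c List.mem_cons_self
    rw [cfTail, div_le_one (by linarith [cfTail_nonneg l])]
    linarith [cfTail_nonneg l]

lemma abs_one_div_add_one_div_sub_le {a b s t : ℝ} (ha : 1 ≤ a) (hb : 1 ≤ b) (hs : 0 ≤ s)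
    (ht : 0 ≤ t) : |1 / (a + 1 / (b + s)) - 1 / (a + 1 / (b + t))| ≤ |s - t| / 4 := by
  have hDs : 2 ≤ a * (b + s) + 1 := by nlinarith
  have hDt : 2 ≤ a * (b + t) + 1 := by nlinarith
  have key : 1 / (a + 1 / (b + s)) - 1 / (a + 1 / (b + t))
      = (s - t) / ((a * (b + s) + 1) * (a * (b + t) + 1)) := by
    field_simp
    ring
  have hD : 4 ≤ (a * (b + s) + 1) * (a * (b + t) + 1) := by nlinarith
  rw [key, abs_div, abs_of_pos (by linarith : (0 : ℝ) < _ * _)]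
  exact div_le_div_of_nonneg_left (abs_nonneg _) (by norm_num) hD

lemma abs_cfTail_ofFn_sub_le {c : ℕ → ℕ} (hc : ∀ i, 0 < c i) {J n m : ℕ} (hn : 2 * J ≤ n)
    (hm : 2 * J ≤ m) :
    |cfTail (List.ofFn fun i : Fin n => c i) - cfTail (List.ofFn fun i : Fin m => c i)|
      ≤ (1 / 4) ^ J := by
  induction J generalizing c n m with
  | zero =>
    have hpos : ∀ k, ∀ d ∈ List.ofFn (fun i : Fin k => c i), 0 < d := by
      simp [List.mem_ofFn, hc]
    rw [pow_zero]
    exact abs_sub_le_of_nonneg_of_le (cfTail_nonneg _) (cfTail_le_one (hpos n))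
      (cfTail_nonneg _) (cfTail_le_one (hpos m))
  | succ J ih =>
    obtain ⟨n, rfl⟩ : ∃ k, n = k + 2 := ⟨n - 2, by omega⟩
    obtain ⟨m, rfl⟩ : ∃ k, m = k + 2 := ⟨m - 2, by omega⟩
    have h := ih (c := fun i => c (i + 2)) (fun i => hc _) (n := n) (m := m) (by omega) (by omega)
    simp only [List.ofFn_succ, cfTail, Fin.val_zero, Fin.val_succ, zero_add, add_assoc,
      Nat.reduceAdd]
    have h0 : (1 : ℝ) ≤ c 0 := by exact_mod_cast hc 0
    have h1 : (1 : ℝ) ≤ c 1 := by exact_mod_cast hc 1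
    calc _ ≤ _ / 4 := abs_one_div_add_one_div_sub_le h0 h1 (cfTail_nonneg _) (cfTail_nonneg _)
      _ ≤ (1 / 4) ^ J / 4 := by gcongr
      _ = (1 / 4) ^ (J + 1) := by ring

lemma cauchySeq_cfTail_ofFn {c : ℕ → ℕ} (hc : ∀ i, 0 < c i) :
    CauchySeq fun n => cfTail (List.ofFn fun i : Fin n => c i) :=
  cauchySeq_of_le_tendsto_0 (fun N => (1 / 4 : ℝ) ^ (N / 2))
    (fun _ _ N hn hm => by
      rw [Real.dist_eq]
      exact abs_cfTail_ofFn_sub_le hc (J := N / 2) (by omega) (by omega))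
    ((tendsto_pow_atTop_nhds_zero_of_lt_one (by norm_num) (by norm_num)).comp
      (Nat.tendsto_div_const_atTop two_ne_zero))

namespace OddOneCF

noncomputable def minusCF : List ℕ → ℝ
  | [] => 0
  | β :: l => 1 / (β - minusCF l)

lemma minusCF_mem_Icc {l : List ℕ} (hl : ∀ β ∈ l, 3 ≤ β) :
    minusCF l ∈ Set.Icc (0 : ℝ) (1 / 2) := by
  induction l with
  | nil => simp [minusCF]
  | cons β l ih =>
    have hβ : (3 : ℝ) ≤ β := by exact_mod_cast hl β List.mem_cons_self
    obtain ⟨h0, h1⟩ := ih fun b hb => hl b (List.mem_cons_of_mem _ hb)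
    rw [minusCF]
    constructor
    · exact one_div_nonneg.2 (by linarith)
    · rw [div_le_div_iff₀ (by linarith) (by norm_num)]
      linarith

lemma minusCF_ofFn_mem_Icc {δ : ℕ → ℕ} {J : ℕ} (hδ : ∀ j < J, 3 ≤ δ j) :
    minusCF (List.ofFn fun j : Fin J => δ j) ∈ Set.Icc (0 : ℝ) (1 / 2) :=
  minusCF_mem_Icc <| by
    simp only [List.mem_ofFn, forall_exists_index, forall_apply_eq_imp_iff]
    exact fun j => hδ j j.2

def oddOneSeq (δ : ℕ → ℕ) (i : ℕ) : ℕ := if i % 2 = 0 then 1 else δ (i / 2) - 2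

lemma oddOneSeq_two_mul (δ : ℕ → ℕ) (k : ℕ) : oddOneSeq δ (2 * k) = 1 := by
  simp [oddOneSeq]

lemma oddOneSeq_add_two (δ : ℕ → ℕ) (i : ℕ) :
    oddOneSeq δ (i + 2) = oddOneSeq (fun j => δ (j + 1)) i := by
  simp only [oddOneSeq, Nat.add_mod_right, show (i + 2) / 2 = i / 2 + 1 by omega]

lemma oddOneSeq_pos {δ : ℕ → ℕ} {J i : ℕ} (hδ : ∀ j < J, 3 ≤ δ j) (hi : i < 2 * J + 1) :
    0 < oddOneSeq δ i := by
  unfold oddOneSeq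
  split_ifs
  · exact one_pos
  · have := hδ (i / 2) (by omega)
    omega

lemma cfTail_ofFn_oddOneSeq {δ : ℕ → ℕ} {J : ℕ} (hδ : ∀ j < J, 3 ≤ δ j) :
    cfTail (List.ofFn fun i : Fin (2 * J + 1) => oddOneSeq δ i)
      = 1 - minusCF (List.ofFn fun j : Fin J => δ j) := by
  induction J generalizing δ with
  | zero => simp [oddOneSeq, cfTail, minusCF]
  | succ J ih =>
    have h := ih (δ := fun j => δ (j + 1)) fun j hj => hδ _ (by omega)
    have hm := minusCF_ofFn_mem_Icc (δ := fun j => δ (j + 1)) (J := J)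
      fun j hj => hδ _ (by omega)
    rw [show 2 * (J + 1) + 1 = 2 * J + 1 + 1 + 1 by ring, List.ofFn_succ, List.ofFn_succ,
      List.ofFn_succ (n := J)]
    simp only [cfTail, minusCF, Fin.val_zero, Fin.val_succ, add_assoc, Nat.reduceAdd,
      oddOneSeq_add_two, h]
    rw [show oddOneSeq δ 0 = 1 from rfl, show oddOneSeq δ 1 = δ 0 - 2 from rfl,
      Nat.cast_sub (by have := hδ 0 (by omega); omega), Nat.cast_one, Nat.cast_ofNat]
    set t := minusCF (List.ofFn fun j : Fin J => δ (j + 1))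
    have hD : (2 : ℝ) ≤ δ 0 - t := by
      have : (3 : ℝ) ≤ δ 0 := by exact_mod_cast hδ 0 (by omega)
      linarith [hm.2]
    rw [show ((δ 0 : ℕ) : ℝ) - 2 + (1 - t) = (δ 0 - t) - 1 by ring]
    generalize (δ 0 : ℝ) - t = D at hD ⊢
    have hD0 : D ≠ 0 := by linarith
    have hD1 : D - 1 ≠ 0 := by linarith
    field_simp
    simp [hD0]

lemma isOddOneCF_of_minusCF (a0 : ℤ) {δ : ℕ → ℕ} {J : ℕ} (hδ : ∀ j < J, 3 ≤ δ j) :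
    IsOddOneCF a0 (a0 + 1 - minusCF (List.ofFn fun j : Fin J => δ j)) := by
  refine Or.inl ⟨List.ofFn fun i : Fin (2 * J + 1) => oddOneSeq δ i, by simp, ?_, ?_, ?_⟩
  · simp only [List.mem_ofFn, forall_exists_index, forall_apply_eq_imp_iff]
    exact fun i => oddOneSeq_pos hδ i.2
  · intro i hi
    rw [List.get_ofFn]
    exact if_pos hi
  · rw [cfFin, cfTail_ofFn_oddOneSeq hδ]
    ring

lemma isOddOneCF_add_one (a0 : ℤ) : IsOddOneCF a0 (a0 + 1) := by
  simpa [minusCF] using isOddOneCF_of_minusCF a0 (δ := id) (J := 0) (by simp)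

lemma isOddOneCF_add_half (a0 : ℤ) : IsOddOneCF a0 (a0 + 1 / 2) := by
  refine Or.inl ⟨[1, 1], by simp, by simp, fun i hi => ?_, by norm_num [cfFin, cfTail]⟩
  fin_cases i
  · rfl
  · simp at hi

lemma exists_isOddOneCF_tendsto_minusCF (a0 : ℤ) {δ : ℕ → ℕ} (hδ : ∀ j, 3 ≤ δ j) :
    ∃ y, IsOddOneCF a0 y ∧
      Tendsto (fun J => a0 + 1 - minusCF (List.ofFn fun j : Fin J => δ j)) atTop (𝓝 y) := by
  have hpos : ∀ i, 0 < oddOneSeq δ i := fun i =>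
    oddOneSeq_pos (J := i) (fun j _ => hδ j) (by omega)
  obtain ⟨t, ht⟩ := cauchySeq_tendsto_of_complete (cauchySeq_cfTail_ofFn hpos)
  refine ⟨a0 + t, Or.inr ⟨oddOneSeq δ, hpos, oddOneSeq_two_mul δ, ht.const_add _⟩, ?_⟩
  have hodd : Tendsto (fun J : ℕ => 2 * J + 1) atTop atTop :=
    tendsto_atTop_atTop.2 fun b => ⟨b, fun a ha => by omega⟩
  convert (ht.comp hodd).const_add (a0 : ℝ) using 2 with J
  rw [Function.comp_apply, cfTail_ofFn_oddOneSeq fun j _ => hδ j]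
  ring

/-- Minus continued fraction of the digits `δ 0, δ 2, δ 4, …` among `δ 0, …, δ (n - 1)`. -/
noncomputable def evenValue (δ : ℕ → ℕ) (n : ℕ) : ℝ :=
  minusCF (List.ofFn fun j : Fin ((n + 1) / 2) => δ (2 * j))

/-- Minus continued fraction of the digits `δ 1, δ 3, δ 5, …` among `δ 0, …, δ (n - 1)`. -/
noncomputable def oddValue (δ : ℕ → ℕ) (n : ℕ) : ℝ :=
  minusCF (List.ofFn fun j : Fin (n / 2) => δ (2 * j + 1))

lemma evenValue_succ (δ : ℕ → ℕ) (n : ℕ) :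
    evenValue δ (n + 1) = 1 / (δ 0 - oddValue (fun k => δ (k + 1)) n) := by
  rw [evenValue, show (n + 1 + 1) / 2 = n / 2 + 1 by omega, List.ofFn_succ]
  simp only [minusCF, oddValue, Fin.val_zero, mul_zero, Fin.val_succ, mul_add, mul_one]

lemma oddValue_succ (δ : ℕ → ℕ) (n : ℕ) :
    oddValue δ (n + 1) = evenValue (fun k => δ (k + 1)) n := rfl

lemma evenValue_two_mul (δ : ℕ → ℕ) (J : ℕ) :
    evenValue δ (2 * J) = minusCF (List.ofFn fun j : Fin J => δ (2 * j)) := by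
  rw [evenValue, show (2 * J + 1) / 2 = J by omega]

lemma oddValue_two_mul (δ : ℕ → ℕ) (J : ℕ) :
    oddValue δ (2 * J) = minusCF (List.ofFn fun j : Fin J => δ (2 * j + 1)) := by
  rw [oddValue, show 2 * J / 2 = J by omega]

structure Form where
  a : ℝ
  b : ℝ
  c : ℝ
  d : ℝ

namespace Form

def eval (F : Form) (u v : ℝ) : ℝ := F.a * u * v + F.b * u + F.c * v + F.d

noncomputable def digit (F : Form) : ℕ := ⌈-F.b / F.d⌉₊

noncomputable def next (F : Form) : Form :=
  ⟨-F.c, F.a + F.c * F.digit, -F.d, F.b + F.d * F.digit⟩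

noncomputable def digitSeq (F : Form) (k : ℕ) : ℕ := (next^[k] F).digit

lemma eval_next (F : Form) (u v : ℝ) (h : (F.digit : ℝ) - v ≠ 0) :
    (F.digit - v) * F.eval (1 / (F.digit - v)) u = F.next.eval u v := by
  simp only [eval, next]
  field_simp
  ring

lemma digitSeq_succ (F : Form) : (fun k => F.digitSeq (k + 1)) = F.next.digitSeq := by
  funext k
  simp only [digitSeq, Function.iterate_succ_apply]

structure Admissible (x : ℝ) (F : Form) : Prop where
  c_neg : F.c < 0
  d_pos : 0 < F.d
  det : F.a * F.d - F.b * F.c = -x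
  two_mul_d_lt : 2 * F.d < -F.b
  d_lt_half : F.d < 1 / 2

namespace Admissible

variable {F : Form} {x : ℝ}

lemma two_lt_div (hF : Admissible x F) : 2 < -F.b / F.d := by
  rw [lt_div_iff₀ hF.d_pos]
  linarith [hF.two_mul_d_lt]

lemma three_le_digit (hF : Admissible x F) : 3 ≤ F.digit := by
  have : (2 : ℝ) < F.digit := hF.two_lt_div.trans_le (Nat.le_ceil _)
  exact_mod_cast this

lemma next_d_nonneg (hF : Admissible x F) : 0 ≤ F.next.d := by
  have h := (div_le_iff₀ hF.d_pos).1 (Nat.le_ceil (-F.b / F.d))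
  simp only [Form.next, digit]
  linarith

lemma next_d_lt (hF : Admissible x F) : F.next.d < F.d := by
  have h := Nat.ceil_lt_add_one (hF.two_lt_div.le.trans' zero_le_two)
  rw [← sub_lt_iff_lt_add, lt_div_iff₀ hF.d_pos] at h
  simp only [Form.next, digit]
  linarith

/-- The digit is chosen so that `c β ≤ -c b / d`, and `b c = a d + x` by the determinant. -/
lemma next_b_le (hF : Admissible x F) : F.next.b ≤ -x / F.d := by
  have h : F.c * F.digit ≤ F.c * (-F.b / F.d) :=
    mul_le_mul_of_nonpos_left (Nat.le_ceil _) hF.c_neg.le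
  have hd := hF.d_pos.ne'
  have hdet : F.c * (-F.b / F.d) = -F.a - x / F.d := by
    field_simp
    linarith [hF.det]
  simp only [Form.next]
  rw [neg_div]
  linarith

lemma next (hF : Admissible x F) (hx : 1 / 2 ≤ x) (hd : 0 < F.next.d) :
    Admissible x F.next where
  c_neg := neg_lt_zero.2 hF.d_pos
  d_pos := hd
  det := by
    simp only [Form.next]
    linarith [hF.det]
  two_mul_d_lt := by
    have h : 2 * F.next.d * F.d < x := by
      nlinarith [hF.next_d_lt, hF.d_lt_half, hF.d_pos]
    have h' : 2 * F.next.d < x / F.d := (lt_div_iff₀ hF.d_pos).2 h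
    linarith [hF.next_b_le, neg_div F.d x]
  d_lt_half := hF.next_d_lt.trans hF.d_lt_half

lemma next_or (hF : Admissible x F) (hx : 1 / 2 ≤ x) :
    Admissible x F.next ∨ F.next.d = 0 := by
  rcases hF.next_d_nonneg.lt_or_eq with h | h
  exacts [Or.inl (hF.next hx h), Or.inr h.symm]

lemma abs_eval_le (hF : Admissible x F) {u v : ℝ} (hv : v ∈ Set.Icc (0 : ℝ) (1 / 2)) :
    |F.eval (1 / (F.digit - v)) u| ≤ 2 / 5 * |F.next.eval u v| := by
  have hβ : (3 : ℝ) ≤ F.digit := by exact_mod_cast hF.three_le_digit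
  have hD : (5 / 2 : ℝ) ≤ F.digit - v := by linarith [hv.2]
  rw [← F.eval_next u v (by linarith), abs_mul, abs_of_pos (by linarith : (0 : ℝ) < F.digit - v)]
  nlinarith [abs_nonneg (F.eval (1 / (F.digit - v)) u)]

end Admissible

variable {x : ℝ}

lemma abs_eval_le (n : ℕ) {F : Form} (hF : ∀ k < n, Admissible x (next^[k] F)) :
    |F.eval (evenValue F.digitSeq n) (oddValue F.digitSeq n)|
      ≤ (2 / 5) ^ n * |(next^[n] F).d| := by
  induction n generalizing F with
  | zero => simp [evenValue, oddValue, minusCF, eval]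
  | succ n ih =>
    have hF' : ∀ k < n, Admissible x (next^[k] F.next) := fun k hk => by
      simpa only [Function.iterate_succ_apply] using hF (k + 1) (by omega)
    have hv : oddValue F.next.digitSeq n ∈ Set.Icc (0 : ℝ) (1 / 2) :=
      minusCF_ofFn_mem_Icc fun j hj => (hF' (2 * j + 1) (by omega)).three_le_digit
    rw [evenValue_succ, oddValue_succ, digitSeq_succ, Function.iterate_succ_apply]
    calc _ ≤ 2 / 5 * |F.next.eval (evenValue F.next.digitSeq n) (oddValue F.next.digitSeq n)| :=
          (hF 0 n.succ_pos).abs_eval_le hv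
      _ ≤ 2 / 5 * ((2 / 5) ^ n * |(next^[n] F.next).d|) := by gcongr; exact ih hF'
      _ = _ := by ring

lemma tendsto_eval {F : Form} (hF : ∀ k, Admissible x (next^[k] F)) :
    Tendsto (fun n => F.eval (evenValue F.digitSeq n) (oddValue F.digitSeq n)) atTop (𝓝 0) := by
  refine squeeze_zero_norm (fun n => ?_)
    (tendsto_pow_atTop_nhds_zero_of_lt_one (by norm_num : (0 : ℝ) ≤ 2 / 5) (by norm_num))
  have hd := hF n
  calc _ ≤ (2 / 5 : ℝ) ^ n * |(next^[n] F).d| := abs_eval_le n fun k _ => hF k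
    _ ≤ (2 / 5) ^ n := by
      rw [abs_of_pos hd.d_pos]
      exact mul_le_of_le_one_right (by positivity) (by linarith [hd.d_lt_half])

lemma admissible_orbit_or (hx : 1 / 2 ≤ x) {F : Form} (hF : Admissible x F ∨ F.d = 0) :
    (∀ k, Admissible x (next^[k] F)) ∨
      ∃ n, (∀ k < n, Admissible x (next^[k] F)) ∧ (next^[n] F).d = 0 := by
  classical
  by_cases hall : ∀ k, Admissible x (next^[k] F)
  · exact Or.inl hall
  have h := not_forall.1 hall
  have hmin : ∀ k < Nat.find h, Admissible x (next^[k] F) := fun k hk =>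
    not_not.1 (Nat.find_min h hk)
  refine Or.inr ⟨Nat.find h, hmin, ?_⟩
  have hnext : Admissible x (next^[Nat.find h] F) ∨ (next^[Nat.find h] F).d = 0 := by
    rcases Nat.eq_zero_or_eq_succ_pred (Nat.find h) with h0 | hs
    · rw [h0]
      exact hF
    · rw [hs, Function.iterate_succ_apply']
      exact (hmin _ (by omega)).next_or hx
  exact hnext.resolve_left (Nat.find_spec h)

end Form

open Form

def initForm (m : ℕ) (x : ℝ) : Form := ⟨1, -1, -(m + 1), m + 1 - x⟩

lemma eval_initForm (m : ℕ) (x u v : ℝ) :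
    (initForm m x).eval u v = (m + 1 - u) * (1 - v) - x := by
  simp only [initForm, eval]
  ring

lemma initForm_admissible_or {m : ℕ} {x : ℝ} (hx1 : m + 1 / 2 < x) (hx2 : x ≤ m + 1) :
    Admissible x (initForm m x) ∨ (initForm m x).d = 0 := by
  rcases hx2.lt_or_eq with hx2 | hx2
  · left
    constructor <;> simp only [initForm] <;> linarith [(m.cast_nonneg : (0 : ℝ) ≤ m)]
  · right
    simp only [initForm]
    linarith

lemma exists_isOddOneCF_mul_eq_of_lt_of_le (m : ℕ) {x : ℝ} (hx1 : m + 1 / 2 < x)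
    (hx2 : x ≤ m + 1) :
    ∃ y z : ℝ, IsOddOneCF m y ∧ IsOddOneCF 0 z ∧ x = y * z := by
  have hx : 1 / 2 ≤ x := by linarith [(m.cast_nonneg : (0 : ℝ) ≤ m)]
  set F := initForm m x
  set δ := F.digitSeq
  rcases admissible_orbit_or hx (initForm_admissible_or hx1 hx2) with hall | ⟨n, hadm, hd⟩
  · have hδ : ∀ k, 3 ≤ δ k := fun k => (hall k).three_le_digit
    obtain ⟨y, hy, hyt⟩ := exists_isOddOneCF_tendsto_minusCF m fun j => hδ (2 * j)
    obtain ⟨z, hz, hzt⟩ := exists_isOddOneCF_tendsto_minusCF 0 fun j => hδ (2 * j + 1)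
    refine ⟨y, z, hy, hz, ?_⟩
    have hlim := (tendsto_eval hall).comp (tendsto_id.const_mul_atTop' two_pos)
    have h := tendsto_nhds_unique ((hyt.mul hzt).sub_const x) (hlim.congr fun J => by
      simp only [Function.comp_apply, id, evenValue_two_mul, oddValue_two_mul, eval_initForm]
      push_cast
      ring)
    linarith
  · have h0 : F.eval (evenValue δ n) (oddValue δ n) = 0 := by
      have h := abs_eval_le n hadm
      rwa [hd, abs_zero, mul_zero, abs_nonpos_iff] at h
    refine ⟨((m : ℤ) : ℝ) + 1 - evenValue δ n, ((0 : ℤ) : ℝ) + 1 - oddValue δ n,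
      isOddOneCF_of_minusCF (J := (n + 1) / 2) _ fun j hj =>
        (hadm (2 * j) (by omega)).three_le_digit,
      isOddOneCF_of_minusCF (J := n / 2) _ fun j hj =>
        (hadm (2 * j + 1) (by omega)).three_le_digit, ?_⟩
    rw [eval_initForm] at h0
    push_cast
    linarith

end OddOneCF

/-- Every positive real `x ∈ ℤ + [1/2, 1]` is a product of two continued fractions
with nonnegative integer parts whose odd-order partial quotients are all equal to `1`. -/
theorem prod_of_two_oddOne_cf (x : ℝ) (hx0 : 0 < x)
    (hx : ∃ m : ℤ, 1 / 2 ≤ x - m ∧ x - m ≤ 1) :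
    ∃ (a0 b0 : ℕ) (y z : ℝ), IsOddOneCF (a0 : ℤ) y ∧ IsOddOneCF (b0 : ℤ) z ∧ x = y * z := by
  obtain ⟨m, hm1, hm2⟩ := hx
  lift m to ℕ using by
    have : ((-1 : ℤ) : ℝ) < m := by push_cast; linarith
    exact_mod_cast this
  push_cast at hm1 hm2
  rcases hm1.lt_or_eq with h | h
  · obtain ⟨y, z, hy, hz, hxyz⟩ :=
      OddOneCF.exists_isOddOneCF_mul_eq_of_lt_of_le m (x := x) (by linarith) (by linarith)
    exact ⟨m, 0, y, z, hy, hz, hxyz⟩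
  · refine ⟨m, 0, _, _, OddOneCF.isOddOneCF_add_half m, OddOneCF.isOddOneCF_add_one 0, ?_⟩
    push_cast
    linarith
end

section
/- Let φ : ℕ → (0,∞) be a positive function with liminf_{n→∞} (log φ(n))/(2n) = ∞ and liminf_{n→∞} (log log φ(n))/(2n) = ∞ (i.e. B = ∞ and b = ∞). Then the Hausdorff dimension of F(φ) = {x ∈ I_even : a_{2n}(x) ≥ φ(n) for infinitely many n} equals 0. -/
open Filter Topology MeasureTheory

/-- The Gauss map `T(x) = 1/x mod 1`. -/
noncomputable def gaussMap (x : ℝ) : ℝ := Int.fract (1 / x)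

/-- The `n`-th continued fraction partial quotient of `x`:
`a_n(x) = ⌊1 / T^{n-1}(x)⌋` for `n ≥ 1`. -/
noncomputable def cfa (n : ℕ) (x : ℝ) : ℤ := ⌊1 / (gaussMap^[n - 1] x)⌋

/-- The set of irrational `x ∈ [0,1)` whose odd-order partial quotients all equal 1. -/
def Ieven : Set ℝ :=
  {x | x ∈ Set.Ico (0 : ℝ) 1 ∧ Irrational x ∧ ∀ k : ℕ, cfa (2 * k + 1) x = 1}

/-- Given `[a_2, a_4, …, a_{2n}]`, the denominator `q_{2n}` of
`[0; 1, a_2, 1, a_4, …, 1, a_{2n}]` (with `q_0 = q_1 = 1`,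
`q_{2j} = a_{2j} q_{2j-1} + q_{2j-2}`, `q_{2j+1} = q_{2j} + q_{2j-1}`). -/
def qEven (l : List ℕ) : ℕ :=
  (l.foldl (fun p a => (p.2 + p.1, a * (p.2 + p.1) + p.2)) ((0 : ℕ), (1 : ℕ))).2

/-- `f_{n,B}(ρ) = Σ_{a_2,…,a_{2n} ∈ 𝒜} (B^{2n} q_{2n}²)^{−ρ}`. -/
noncomputable def fnB (A : Set ℕ) (B : ℝ) (n : ℕ) (ρ : ℝ) : ENNReal :=
  ∑' v : Fin n → A,
    ENNReal.ofReal ((B ^ (2 * n) * (qEven (List.ofFn fun i => (v i : ℕ)) : ℝ) ^ 2) ^ (-ρ))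

/-- `s_{n,B}(𝒜) = inf {ρ ≥ 0 : f_{n,B}(ρ) ≤ 1}`. -/
noncomputable def snB (A : Set ℕ) (B : ℝ) (n : ℕ) : ℝ :=
  sInf {ρ : ℝ | 0 ≤ ρ ∧ fnB A B n ρ ≤ 1}

/-- `q_n(x)`: denominator of the `n`-th convergent of `x`. -/
noncomputable def qden (x : ℝ) : ℕ → ℤ
  | 0 => 1
  | 1 => cfa 1 x
  | (n + 2) => cfa (n + 2) x * qden x (n + 1) + qden x n

/-- `p_n(x)`: numerator of the `n`-th convergent of `x ∈ [0,1)`. -/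
noncomputable def pnum (x : ℝ) : ℕ → ℤ
  | 0 => 0
  | 1 => 1
  | (n + 2) => cfa (n + 2) x * pnum x (n + 1) + pnum x n

/-!
The hypotheses give `exp (exp (M n)) ≤ φ n` eventually, for every `M`, so every `x ∈ F(φ)` has
`a_k(x) ≥ exp (exp (M k))` for infinitely many `k`. Such an `x` is a Liouville number: if
`a_{k+1} < q_k ^ N` for all large `k`, the convergent denominators would satisfy
`q_{k+1} ≤ q_k ^ (N + 2)`, forcing `a_k ≤ C ^ ((N + 2) ^ k) < exp (exp (M k))` eventually.
So `a_{k+1} ≥ q_k ^ N` for some `k`, and then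
`|x - p_k / q_k| ≤ 1 / (a_{k+1} q_k ^ 2) < q_k ^ (-N)`.

Liouville numbers have Hausdorff dimension `0`: inside a unit interval, the numbers with
`|x - a / n| < n ^ (-p)` for infinitely many `n` are covered, for every `B`, by the `O(n)`
intervals of length `2 n ^ (-p)` with `n ≥ B`, and `∑ n * n ^ (-p d) < ∞` once `d > 2 / p`.
-/

open scoped NNReal ENNReal

theorem hausdorffMeasure_setOf_frequently_eq_zero {X ι : Type*} [EMetricSpace X]
    [MeasurableSpace X] [BorelSpace X] [Countable ι] {d : ℝ} (hd : 0 < d)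
    {s : ℕ → ι → Set X} (hs : ∑' n, ∑' i, Metric.ediam (s n i) ^ d ≠ ∞) :
    μH[d] {x | ∃ᶠ n in atTop, ∃ i, x ∈ s n i} = 0 := by
  set f : ℕ → ℝ≥0∞ := fun n => ∑' i, Metric.ediam (s n i) ^ d
  have htail : Tendsto (fun B => ∑' k, f (k + B)) atTop (𝓝 0) :=
    ENNReal.tendsto_sum_nat_add f hs
  have hr : Tendsto (fun B => (∑' k, f (k + B)) ^ d⁻¹) atTop (𝓝 0) := by
    have := ((ENNReal.continuous_rpow_const (y := d⁻¹)).tendsto 0).comp htail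
    rwa [ENNReal.zero_rpow_of_pos (inv_pos.2 hd)] at this
  have hdiam : ∀ B (p : ℕ × ι), Metric.ediam (s (p.1 + B) p.2) ≤ (∑' k, f (k + B)) ^ d⁻¹ := by
    rintro B ⟨k, i⟩
    rw [ENNReal.le_rpow_inv_iff hd]
    exact (ENNReal.le_tsum i).trans (ENNReal.le_tsum (f := fun k => f (k + B)) k)
  have hcover : ∀ B, {x | ∃ᶠ n in atTop, ∃ i, x ∈ s n i} ⊆ ⋃ p : ℕ × ι, s (p.1 + B) p.2 := by
    intro B x hx
    obtain ⟨n, hn, i, hi⟩ := frequently_atTop.1 hx B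
    exact Set.mem_iUnion.2 ⟨(n - B, i), by rwa [Nat.sub_add_cancel hn]⟩
  refine le_antisymm ?_ zero_le
  calc μH[d] {x | ∃ᶠ n in atTop, ∃ i, x ∈ s n i}
      ≤ liminf (fun B => ∑' p : ℕ × ι, Metric.ediam (s (p.1 + B) p.2) ^ d) atTop :=
        Measure.hausdorffMeasure_le_liminf_tsum d _ _ hr _ (.of_forall hdiam) (.of_forall hcover)
    _ = 0 := by simp only [ENNReal.tsum_prod']; exact htail.liminf_eq

lemma mem_Icc_of_abs_sub_div_lt_one {m a : ℤ} {n : ℕ} {x : ℝ} (hn : 0 < n)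
    (hx : x ∈ Set.Icc (m : ℝ) (m + 1)) (ha : |x - a / n| < 1) :
    a ∈ Finset.Icc (m * n - n) (m * n + 2 * n) := by
  have hn' : (0 : ℝ) < n := by exact_mod_cast hn
  obtain ⟨hxm, hxm'⟩ := hx
  obtain ⟨h1, h2⟩ := abs_lt.1 ha
  have hlo : ((m * n - n : ℤ) : ℝ) < a := by
    push_cast
    nlinarith [div_mul_cancel₀ (a : ℝ) hn'.ne']
  have hhi : (a : ℝ) < ((m * n + 2 * n : ℤ) : ℝ) := by
    push_cast
    nlinarith [div_mul_cancel₀ (a : ℝ) hn'.ne']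
  rw [Finset.mem_Icc]
  exact ⟨(Int.cast_lt.1 hlo).le, (Int.cast_lt.1 hhi).le⟩

lemma summable_three_mul_add_one_mul_rpow_neg {s : ℝ} (hs : 2 < s) :
    Summable fun n : ℕ => ((3 * n + 1 : ℕ) : ℝ≥0) * (n : ℝ≥0) ^ (-s) := by
  have h : ∀ n : ℕ, ((3 * n + 1 : ℕ) : ℝ≥0) * (n : ℝ≥0) ^ (-s)
      = 3 * (n : ℝ≥0) ^ (1 + -s) + (n : ℝ≥0) ^ (-s) := by
    intro n
    rw [NNReal.rpow_add' (by linarith), NNReal.rpow_one]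
    push_cast; ring
  simp only [h]
  exact ((NNReal.summable_rpow.2 (by linarith)).mul_left 3).add
    (NNReal.summable_rpow.2 (by linarith))

theorem hausdorffMeasure_setOf_frequently_abs_sub_div_lt_rpow_eq_zero (m : ℤ) {q d : ℝ}
    (hd : 0 < d) (hqd : 2 < q * d) :
    μH[d] {x : ℝ | x ∈ Set.Icc (m : ℝ) (m + 1) ∧
      ∃ᶠ n : ℕ in atTop, ∃ a : ℤ, |x - a / n| < (n : ℝ) ^ (-q)} = 0 := by
  have hq : 0 < q := by nlinarith
  set w : ℕ → ℝ≥0 := fun n => (n : ℝ≥0) ^ (-q)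
  have hw : ∀ n : ℕ, (w n : ℝ) = (n : ℝ) ^ (-q) := fun n => by simp [w, NNReal.coe_rpow]
  set s : ℕ → ℤ → Set ℝ := fun n a => Set.Icc (m : ℝ) (m + 1) ∩ Metric.ball (a / n) (w n)
  have hsupp : ∀ (n : ℕ) (a : ℤ), a ∉ Finset.Icc (m * n - n) (m * n + 2 * n) → s n a = ∅ := by
    rintro n a ha
    refine Set.eq_empty_of_forall_notMem fun x ⟨hx, hxa⟩ => ha ?_
    rw [Metric.mem_ball, Real.dist_eq, hw] at hxa
    rcases Nat.eq_zero_or_pos n with rfl | hn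
    · rw [Nat.cast_zero, Real.zero_rpow (neg_ne_zero.2 hq.ne')] at hxa
      exact absurd hxa (abs_nonneg _).not_gt
    · exact mem_Icc_of_abs_sub_div_lt_one hn hx
        (hxa.trans_le (Real.rpow_le_one_of_one_le_of_nonpos (by exact_mod_cast hn) (by linarith)))
  have hdiam : ∀ n a, Metric.ediam (s n a) ^ d ≤ ((2 * w n) ^ d : ℝ≥0) := by
    intro n a
    rw [ENNReal.coe_rpow_of_nonneg _ hd.le]
    gcongr
    calc Metric.ediam (s n a) ≤ Metric.ediam (Metric.eball ((a : ℝ) / n) (w n)) := by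
          rw [Metric.eball_coe]; exact Metric.ediam_mono Set.inter_subset_right
      _ ≤ _ := by push_cast; exact Metric.ediam_eball_le
  have hrow : ∀ n, ∑' a, Metric.ediam (s n a) ^ d ≤
      (((3 * n + 1 : ℕ) : ℝ≥0) * (2 : ℝ≥0) ^ d * (n : ℝ≥0) ^ (-(q * d)) : ℝ≥0) := by
    intro n
    have hcard : (Finset.Icc (m * n - n) (m * n + 2 * n)).card = 3 * n + 1 := by
      rw [Int.card_Icc, show m * n + 2 * n + 1 - (m * n - n) = ((3 * n + 1 : ℕ) : ℤ) by
        push_cast; ring, Int.toNat_natCast]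
    rw [tsum_eq_sum (s := Finset.Icc (m * n - n) (m * n + 2 * n)) fun a ha => by
      rw [hsupp n a ha, Metric.ediam_empty, ENNReal.zero_rpow_of_pos hd]]
    calc ∑ a ∈ Finset.Icc (m * n - n) (m * n + 2 * n), Metric.ediam (s n a) ^ d
        ≤ ∑ a ∈ Finset.Icc (m * n - n) (m * n + 2 * n), (((2 * w n) ^ d : ℝ≥0) : ℝ≥0∞) :=
          Finset.sum_le_sum fun a _ => hdiam n a
      _ = _ := by
          rw [Finset.sum_const, hcard, nsmul_eq_mul, NNReal.mul_rpow,
            ← NNReal.rpow_mul, neg_mul]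
          push_cast; ring
  refine measure_mono_null ?_ (hausdorffMeasure_setOf_frequently_eq_zero hd
    (s := s) (ne_top_of_le_ne_top ?_ (ENNReal.tsum_le_tsum hrow)))
  · rintro x ⟨hx, hfreq⟩
    refine hfreq.mono fun n ⟨a, ha⟩ => ⟨a, hx, ?_⟩
    rwa [Metric.mem_ball, Real.dist_eq, hw]
  · rw [ENNReal.tsum_coe_ne_top_iff_summable]
    simpa only [mul_right_comm] using
      (summable_three_mul_add_one_mul_rpow_neg hqd).mul_right ((2 : ℝ≥0) ^ d)

theorem dimH_setOf_liouvilleWith_le {p : ℝ} (hp : 0 < p) :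
    dimH {x : ℝ | LiouvilleWith p x} ≤ ENNReal.ofReal (2 / p) := by
  refine dimH_le fun d hd => le_of_not_gt fun hlt => ?_
  have hd0 : 0 < (d : ℝ) := ENNReal.coe_pos.1 (zero_le.trans_lt hlt)
  rw [← ENNReal.ofReal_coe_nnreal, ENNReal.ofReal_lt_ofReal_iff hd0] at hlt
  have h2d : 2 / (d : ℝ) < p := (div_lt_comm₀ hp hd0).1 hlt
  obtain ⟨q, hq, hqp⟩ := exists_between h2d
  have hqd : 2 < q * d := (div_lt_iff₀ hd0).1 hq
  have hnull : μH[d] {x : ℝ | LiouvilleWith p x} = 0 := by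
    refine measure_mono_null (fun x hx => ?_) (measure_iUnion_null fun m : ℤ =>
      hausdorffMeasure_setOf_frequently_abs_sub_div_lt_rpow_eq_zero m hd0 hqd)
    refine Set.mem_iUnion.2 ⟨⌊x⌋, ⟨Int.floor_le x, (Int.lt_floor_add_one x).le⟩, ?_⟩
    exact (hx.frequently_lt_rpow_neg hqp).mono fun n ⟨a, _, ha⟩ => ⟨a, ha⟩
  exact ENNReal.zero_ne_top (hnull ▸ hd)

theorem dimH_setOf_liouville : dimH {x : ℝ | Liouville x} = 0 := by
  refine le_antisymm (ENNReal.le_of_forall_pos_le_add fun ε hε _ => ?_) zero_le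
  have hε' : (0 : ℝ) < ε := hε
  calc dimH {x : ℝ | Liouville x} ≤ dimH {x : ℝ | LiouvilleWith (2 / ε) x} :=
        dimH_mono fun x hx => hx.liouvilleWith _
    _ ≤ ENNReal.ofReal (2 / (2 / ε)) := dimH_setOf_liouvilleWith_le (by positivity)
    _ = 0 + ε := by rw [div_div_cancel₀ two_ne_zero, zero_add, ENNReal.ofReal_coe_nnreal]

theorem Irrational.iterate_gaussMap {x : ℝ} (hx : Irrational x) (n : ℕ) :
    Irrational (gaussMap^[n] x) := by
  induction n with
  | zero => exact hx
  | succ n ih =>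
    rw [Function.iterate_succ_apply']
    simpa only [gaussMap, Int.fract, one_div] using ih.inv.sub_intCast _

theorem eventually_pow_pow_lt_exp_exp {Q : ℝ} (hQ : 0 < Q) {c : ℕ} (hc : 0 < c) :
    ∀ᶠ k : ℕ in atTop, Q ^ (c ^ k) < Real.exp (Real.exp ((Real.log c + 1) * k)) := by
  filter_upwards [(Real.tendsto_exp_atTop.comp tendsto_natCast_atTop_atTop).eventually_gt_atTop
    (Real.log Q)] with k hk
  have hc' : (0 : ℝ) < c := by exact_mod_cast hc
  have hck : ((c ^ k : ℕ) : ℝ) = Real.exp (k * Real.log c) := by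
    rw [Nat.cast_pow, ← Real.rpow_natCast, Real.rpow_def_of_pos hc', mul_comm]
  calc Q ^ (c ^ k) = Real.exp (Real.exp (k * Real.log c) * Real.log Q) := by
        rw [← hck, ← Real.rpow_natCast, Real.rpow_def_of_pos hQ, mul_comm]
    _ < Real.exp (Real.exp (k * Real.log c) * Real.exp k) := by gcongr; exact hk
    _ = Real.exp (Real.exp ((Real.log c + 1) * k)) := by rw [← Real.exp_add]; ring_nf

section ContinuedFraction

open GenContFract

variable {x : ℝ} (hx : x ∈ Set.Ico 0 1) (hirr : Irrational x)
include hx hirr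

theorem GenContFract.IntFractPair.stream_succ_eq_cfa (n : ℕ) :
    IntFractPair.stream x (n + 1) = some ⟨cfa (n + 1) x, gaussMap^[n + 1] x⟩ := by
  induction n with
  | zero =>
    have h0 : IntFractPair.stream x 0 = some ⟨0, x⟩ := by
      simp [IntFractPair.stream_zero, IntFractPair.of, Int.floor_eq_zero_iff.2 hx,
        Int.fract_eq_self.2 hx]
    rw [IntFractPair.stream_succ_of_some h0 hirr.ne_zero]
    simp [IntFractPair.of, cfa, gaussMap, one_div]
  | succ n ih =>
    rw [IntFractPair.stream_succ_of_some ih (hirr.iterate_gaussMap _).ne_zero,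
      Function.iterate_succ_apply' _ (n + 1)]
    simp [IntFractPair.of, cfa, gaussMap, one_div]

theorem GenContFract.of_s_get?_eq_cfa (n : ℕ) :
    (GenContFract.of x).s.get? n = some ⟨1, (cfa (n + 1) x : ℝ)⟩ :=
  get?_of_eq_some_of_succ_get?_intFractPair_stream (IntFractPair.stream_succ_eq_cfa hx hirr n)

theorem GenContFract.of_dens_eq_qden : ∀ n, (GenContFract.of x).dens n = qden x n
  | 0 => by simp [qden]
  | 1 => by rw [first_den_eq (of_s_get?_eq_cfa hx hirr 0)]; rfl
  | n + 2 => by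
    rw [dens_recurrence (of_s_get?_eq_cfa hx hirr (n + 1)) (of_dens_eq_qden n)
      (of_dens_eq_qden (n + 1)), qden]
    push_cast; ring

theorem GenContFract.of_nums_eq_pnum : ∀ n, (GenContFract.of x).nums n = pnum x n
  | 0 => by
    rw [zeroth_num_eq_h, of_h_eq_floor, Int.floor_eq_zero_iff.2 hx]; rfl
  | 1 => by
    rw [first_num_eq (of_s_get?_eq_cfa hx hirr 0), of_h_eq_floor, Int.floor_eq_zero_iff.2 hx]
    simp [pnum]
  | n + 2 => by
    rw [nums_recurrence (of_s_get?_eq_cfa hx hirr (n + 1)) (of_nums_eq_pnum n)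
      (of_nums_eq_pnum (n + 1)), pnum]
    push_cast; ring

theorem abs_sub_pnum_div_qden_le (n : ℕ) :
    |x - pnum x n / qden x n| ≤ 1 / (cfa (n + 1) x * qden x n * qden x n) := by
  have h := abs_sub_convergents_le' (partDen_eq_s_b (of_s_get?_eq_cfa hx hirr n))
  rwa [conv_eq_num_div_den, of_nums_eq_pnum hx hirr, of_dens_eq_qden hx hirr] at h

theorem qden_mono (n : ℕ) : (qden x n : ℝ) ≤ qden x (n + 1) := by
  simpa only [of_dens_eq_qden hx hirr] using of_den_mono (v := x) (n := n)

theorem two_le_qden {n : ℕ} (hn : 2 ≤ n) : (2 : ℝ) ≤ qden x n := by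
  have h := succ_nth_fib_le_of_nth_den (v := x) (n := n) (Or.inr fun h => by
    rw [terminatedAt_iff_s_none, of_s_get?_eq_cfa hx hirr] at h
    exact Option.some_ne_none _ h)
  rw [of_dens_eq_qden hx hirr] at h
  exact le_trans (by exact_mod_cast Nat.fib_mono (by omega : 3 ≤ n + 1)) h

theorem qden_succ_le (n : ℕ) : (qden x (n + 1) : ℝ) ≤ (cfa (n + 1) x + 1) * qden x n := by
  cases n with
  | zero => simp [qden]
  | succ n =>
    have h := qden_mono hx hirr n
    simp only [qden, Int.cast_add, Int.cast_mul]
    linarith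

theorem qden_le_pow_pow_of_cfa_lt {N : ℕ}
    (H : ∀ k, 2 ≤ k → (cfa (k + 1) x : ℝ) < (qden x k : ℝ) ^ N) (j : ℕ) :
    (qden x (j + 2) : ℝ) ≤ (qden x 2 : ℝ) ^ ((N + 2) ^ j) := by
  induction j with
  | zero => simp
  | succ j ih =>
    set q := (qden x (j + 2) : ℝ)
    have hq : 2 ≤ q := two_le_qden hx hirr (by omega)
    have hqN : q ≤ q ^ (N + 1) := le_self_pow₀ (by linarith) (by omega)
    calc (qden x (j + 1 + 2) : ℝ) ≤ (cfa (j + 3) x + 1) * q := qden_succ_le hx hirr (j + 2)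
      _ ≤ (q ^ N + 1) * q := by gcongr; exact (H (j + 2) (by omega)).le
      _ = q ^ (N + 1) + q := by ring
      _ ≤ q * q ^ (N + 1) := by nlinarith
      _ = q ^ (N + 2) := by ring
      _ ≤ ((qden x 2 : ℝ) ^ ((N + 2) ^ j)) ^ (N + 2) := by gcongr
      _ = (qden x 2 : ℝ) ^ ((N + 2) ^ (j + 1)) := by rw [← pow_mul, pow_succ]

theorem liouville_of_frequently_exp_exp_le_cfa
    (h : ∀ M : ℝ, ∃ᶠ k : ℕ in atTop, Real.exp (Real.exp (M * k)) ≤ cfa k x) : Liouville x := by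
  intro N
  obtain ⟨k, hk, hgood⟩ : ∃ k, 2 ≤ k ∧ (qden x k : ℝ) ^ N ≤ cfa (k + 1) x := by
    by_contra! H
    set Q := (qden x 2 : ℝ)
    have hQ : 2 ≤ Q := two_le_qden hx hirr le_rfl
    have hbound : ∀ j, (cfa (j + 3) x : ℝ) ≤ Q ^ ((N + 2) ^ (j + 3)) := fun j =>
      calc (cfa (j + 3) x : ℝ) ≤ (qden x (j + 2) : ℝ) ^ N := (H (j + 2) (by omega)).le
        _ ≤ (Q ^ ((N + 2) ^ j)) ^ N := by
            gcongr
            · linarith [two_le_qden hx hirr (n := j + 2) (by omega)]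
            · exact qden_le_pow_pow_of_cfa_lt hx hirr H j
        _ ≤ Q ^ ((N + 2) ^ (j + 3)) := by
            rw [← pow_mul, pow_add]
            gcongr
            · linarith
            · exact (Nat.le_add_right N 2).trans (Nat.le_self_pow (by norm_num) _)
    obtain ⟨k, hle, hk, hlt⟩ := ((h (Real.log (N + 2 : ℕ) + 1)).and_eventually
      ((eventually_ge_atTop 3).and (eventually_pow_pow_lt_exp_exp (by linarith : 0 < Q)
        (by omega : 0 < N + 2)))).exists
    obtain ⟨j, rfl⟩ := Nat.exists_eq_add_of_le' hk
    linarith [hbound j]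
  have hq : (2 : ℝ) ≤ qden x k := two_le_qden hx hirr hk
  refine ⟨pnum x k, qden x k, by exact_mod_cast hq,
    by simpa using hirr.ne_rat (pnum x k / qden x k), ?_⟩
  calc |x - pnum x k / qden x k| ≤ 1 / (cfa (k + 1) x * qden x k * qden x k) :=
        abs_sub_pnum_div_qden_le hx hirr k
    _ < 1 / (qden x k : ℝ) ^ N := by
        have hqN : (0 : ℝ) < (qden x k : ℝ) ^ N := by positivity
        gcongr
        calc (qden x k : ℝ) ^ N < (qden x k : ℝ) ^ N * (qden x k * qden x k) :=
              lt_mul_of_one_lt_right hqN (by nlinarith)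
          _ ≤ cfa (k + 1) x * qden x k * qden x k := by rw [← mul_assoc]; gcongr

end ContinuedFraction

theorem eventually_exp_exp_le_of_liminf_eq_top {φ : ℕ → ℝ} (hφ : ∀ n, 0 < φ n)
    (hB : Filter.liminf (fun n : ℕ => ((Real.log (φ n) / (2 * n) : ℝ) : EReal)) atTop = ⊤)
    (hb : Filter.liminf
        (fun n : ℕ => ((Real.log (Real.log (φ n)) / (2 * n) : ℝ) : EReal)) atTop = ⊤)
    (M : ℝ) : ∀ᶠ n : ℕ in atTop, Real.exp (Real.exp (M * (2 * n))) ≤ φ n := by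
  have hlog := eventually_lt_of_lt_liminf (hB ▸ EReal.coe_lt_top 0)
  have hloglog := eventually_lt_of_lt_liminf (hb ▸ EReal.coe_lt_top M)
  filter_upwards [hlog, hloglog, eventually_gt_atTop 0] with n hlog hloglog hn
  have hn : (0 : ℝ) < 2 * n := by positivity
  rw [EReal.coe_lt_coe_iff, lt_div_iff₀ hn] at hlog hloglog
  calc Real.exp (Real.exp (M * (2 * n))) ≤ Real.exp (Real.exp (Real.log (Real.log (φ n)))) := by
        gcongr
    _ = φ n := by rw [Real.exp_log (by linarith), Real.exp_log (hφ n)]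

/-- Theorem 1.6, case `B = ∞`, `b = ∞`: if `liminf (log φ(n))/(2n) = ∞` and
`liminf (log log φ(n))/(2n) = ∞`, then `dim_H F(φ) = 0`. -/
theorem dimH_Fphi_case_b_infinite (φ : ℕ → ℝ) (hφ : ∀ n, 0 < φ n)
    (hB : Filter.liminf (fun n : ℕ => ((Real.log (φ n) / (2 * n) : ℝ) : EReal)) atTop = ⊤)
    (hb : Filter.liminf
        (fun n : ℕ => ((Real.log (Real.log (φ n)) / (2 * n) : ℝ) : EReal)) atTop = ⊤) :
    dimH {x | x ∈ Ieven ∧ ∃ᶠ n in atTop, φ n ≤ (cfa (2 * n) x : ℝ)} = 0 := by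
  refine le_antisymm ?_ zero_le
  calc dimH {x | x ∈ Ieven ∧ ∃ᶠ n in atTop, φ n ≤ (cfa (2 * n) x : ℝ)}
      ≤ dimH {x : ℝ | Liouville x} := dimH_mono ?_
    _ = 0 := dimH_setOf_liouville
  rintro x ⟨⟨hx, hirr, -⟩, hfreq⟩
  refine liouville_of_frequently_exp_exp_le_cfa hx hirr fun M => ?_
  have h2n : Tendsto (fun n : ℕ => 2 * n) atTop atTop :=
    tendsto_id.const_mul_atTop' two_pos
  refine h2n.frequently ((hfreq.and_eventually
    (eventually_exp_exp_le_of_liminf_eq_top hφ hB hb M)).mono fun n ⟨hφa, hexp⟩ => ?_)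
  push_cast
  exact hexp.trans hφa
end

section
/- For every nonempty set 𝒜 of positive integers and every real number B > 1, the limit s_B(𝒜) = lim_{n→∞} s_{n,B}(𝒜) exists and satisfies 0 ≤ s_B(𝒜) ≤ 1. -/
open Filter Topology MeasureTheory

/-!
For `ρ ≥ 0` the sums are submultiplicative, `f_{m+n}(ρ) ≤ f_m(ρ) f_n(ρ)`, because the continuant of
a concatenation dominates the product of the continuants: `q(l ++ l') ≥ q(l) q(l')`.
If `s_{n,B} < t`, choose `s_{n,B} < ρ < ρ + δ < t`; then `f_n(ρ + δ) ≤ B^{-2nδ} f_n(ρ) < 1`, and a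
submultiplicative sequence with one term below `1` and a finite first term tends to `0`. Finiteness
of `f_1(ρ + δ)` comes from padding a single quotient with copies of a fixed element of `𝒜`, which
embeds `f_1` into `f_n` up to a constant factor. Hence `s_{m,B} < t` for all large `m`, so `s_{m,B}`
converges to `inf_{n ≥ 1} s_{n,B}`. Finally `f_n(1) ≤ f_1(1)^n ≤ (∑_{a ≥ 1} 1/(a(a+1)))^n = 1`
gives `s_{n,B} ≤ 1`.
-/

open scoped ENNReal

/-- One step of the recurrence, `(q_{2j-1}, q_{2j}) ↦ (q_{2j+1}, q_{2j+2})`; started from `(1, 0)`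
instead of `(0, 1)` it computes the numerators `p_{2j}`. -/
def qStep (p : ℕ × ℕ) (a : ℕ) : ℕ × ℕ := (p.2 + p.1, a * (p.2 + p.1) + p.2)

def pEven (l : List ℕ) : ℕ := (l.foldl qStep (1, 0)).2

lemma qEven_eq_foldl (l : List ℕ) : qEven l = (l.foldl qStep (0, 1)).2 := rfl

lemma foldl_qStep_eq (l : List ℕ) (x y : ℕ) :
    l.foldl qStep (x, y) = x • l.foldl qStep (1, 0) + y • l.foldl qStep (0, 1) := by
  induction l generalizing x y with
  | nil => ext <;> simp
  | cons a t ih =>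
    simp only [List.foldl_cons, qStep, zero_add, add_zero, mul_one]
    rw [ih, ih 1 a, ih 1 (a + 1)]
    ext <;> simp only [Prod.fst_add, Prod.snd_add, Prod.smul_fst,
      Prod.smul_snd, smul_eq_mul] <;> ring

lemma qEven_append (l l' : List ℕ) :
    qEven (l ++ l') =
      (l.foldl qStep (0, 1)).1 * pEven l' + qEven l * qEven l' := by
  rw [qEven_eq_foldl, List.foldl_append, ← Prod.mk.eta (p := l.foldl qStep (0, 1)),
    foldl_qStep_eq]
  rfl

lemma qEven_mul_le_qEven_append (l l' : List ℕ) : qEven l * qEven l' ≤ qEven (l ++ l') := by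
  rw [qEven_append]
  exact Nat.le_add_left _ _

lemma qEven_cons (a : ℕ) (l : List ℕ) :
    qEven (a :: l) = pEven l + (a + 1) * qEven l := by
  simpa [qStep, qEven] using qEven_append [a] l

lemma pEven_le_qEven (l : List ℕ) : pEven l ≤ qEven l := by
  cases l with
  | nil => simp [pEven, qEven]
  | cons a t =>
    rw [pEven, qEven_eq_foldl]
    simp only [List.foldl_cons, qStep, zero_add, add_zero, mul_one]
    rw [foldl_qStep_eq t 1 a, foldl_qStep_eq t 1 (a + 1)]
    simp only [Prod.snd_add, Prod.smul_snd, smul_eq_mul]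
    gcongr
    omega

lemma qEven_singleton (a : ℕ) : qEven [a] = a + 1 := by
  simp [qEven]

lemma qEven_pos (l : List ℕ) : 0 < qEven l := by
  induction l with
  | nil => simp [qEven]
  | cons a t ih => rw [qEven_cons]; positivity

lemma qEven_cons_le (a : ℕ) (l : List ℕ) : qEven (a :: l) ≤ 2 * (a + 1) * qEven l := by
  have := pEven_le_qEven l
  rw [qEven_cons]
  nlinarith

section Submultiplicative

variable {u : ℕ → ℝ≥0∞}

lemma le_pow_mul_of_submultiplicative (hmul : ∀ m n, u (m + n) ≤ u m * u n) (k n r : ℕ) :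
    u (k * n + r) ≤ u n ^ k * u r := by
  induction k with
  | zero => simp
  | succ k ih =>
    calc u ((k + 1) * n + r) = u (n + (k * n + r)) := by ring_nf
      _ ≤ u n * u (k * n + r) := hmul _ _
      _ ≤ u n * (u n ^ k * u r) := by gcongr
      _ = u n ^ (k + 1) * u r := by ring

lemma tendsto_zero_of_submultiplicative (hmul : ∀ m n, u (m + n) ≤ u m * u n) (h0 : u 0 ≤ 1)
    (h1 : u 1 ≠ ∞) {n : ℕ} (hn : 0 < n) (hlt : u n < 1) : Tendsto u atTop (𝓝 0) := by
  set C := max 1 (u 1) ^ n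
  have hC : C ≠ ∞ := ENNReal.pow_ne_top (max_ne_top ENNReal.one_ne_top h1)
  have hrem : ∀ r < n, u r ≤ C := fun r hr =>
    calc u r = u (r * 1 + 0) := by simp
      _ ≤ u 1 ^ r * u 0 := le_pow_mul_of_submultiplicative hmul r 1 0
      _ ≤ max 1 (u 1) ^ r * 1 := by gcongr; exact le_max_right _ _
      _ ≤ C := by rw [mul_one]; exact pow_le_pow_right₀ (le_max_left _ _) hr.le
  have hbound : ∀ m, u m ≤ u n ^ (m / n) * C := fun m =>
    calc u m = u (m / n * n + m % n) := by rw [Nat.div_add_mod']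
      _ ≤ u n ^ (m / n) * u (m % n) := le_pow_mul_of_submultiplicative hmul _ _ _
      _ ≤ u n ^ (m / n) * C := by gcongr; exact hrem _ (Nat.mod_lt _ hn)
  have hlim : Tendsto (fun m => u n ^ (m / n) * C) atTop (𝓝 0) := by
    have := (ENNReal.tendsto_pow_atTop_nhds_zero_of_lt_one hlt).comp
      (Nat.tendsto_div_const_atTop hn.ne')
    simpa using ENNReal.Tendsto.mul_const this (Or.inr hC)
  exact tendsto_of_tendsto_of_tendsto_of_le_of_le tendsto_const_nhds hlim (fun _ => zero_le)
    hbound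

end Submultiplicative

lemma ofReal_rpow_neg_mul {x y : ℝ} (hx : 0 ≤ x) (hy : 0 ≤ y) (ρ : ℝ) :
    ENNReal.ofReal ((x * y) ^ (-ρ)) = ENNReal.ofReal (x ^ (-ρ)) * ENNReal.ofReal (y ^ (-ρ)) := by
  rw [Real.mul_rpow hx hy, ENNReal.ofReal_mul (by positivity)]

lemma ofReal_rpow_neg_le_of_le {x y ρ : ℝ} (hx : 0 < x) (hxy : x ≤ y) (hρ : 0 ≤ ρ) :
    ENNReal.ofReal (y ^ (-ρ)) ≤ ENNReal.ofReal (x ^ (-ρ)) :=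
  ENNReal.ofReal_le_ofReal (Real.rpow_le_rpow_of_nonpos hx hxy (neg_nonpos.2 hρ))

lemma hasSum_inv_succ_sub_inv_succ_succ :
    HasSum (fun k : ℕ => ((k : ℝ) + 1)⁻¹ - ((k : ℝ) + 2)⁻¹) 1 := by
  rw [hasSum_iff_tendsto_nat_of_nonneg
    fun k => sub_nonneg.2 (inv_anti₀ (by positivity) (by linarith))]
  have hpartial (N : ℕ) :
      ∑ k ∈ Finset.range N, (((k : ℝ) + 1)⁻¹ - ((k : ℝ) + 2)⁻¹) = 1 - ((N : ℝ) + 1)⁻¹ := by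
    have := Finset.sum_range_sub' (fun k : ℕ => ((k : ℝ) + 1)⁻¹) N
    push_cast at this
    simpa [add_assoc, one_add_one_eq_two] using this
  simp_rw [hpartial]
  simpa using (tendsto_one_div_add_atTop_nhds_zero_nat (𝕜 := ℝ)).const_sub 1

-- `(a + 1)⁻² ≤ a⁻¹ - (a + 1)⁻¹`, and the right-hand side telescopes.
lemma tsum_inv_succ_sq_le_one {A : Set ℕ} (hA1 : ∀ a ∈ A, 1 ≤ a) :
    ∑' a : A, ENNReal.ofReal ((((a : ℕ) : ℝ) + 1) ^ 2)⁻¹ ≤ 1 := by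
  set g : ℕ → ℝ := fun k => ((k : ℝ) + 1)⁻¹ - ((k : ℝ) + 2)⁻¹
  have hg : ∑' k, ENNReal.ofReal (g k) = 1 := by
    rw [← ENNReal.ofReal_tsum_of_nonneg (fun k => ?_) hasSum_inv_succ_sub_inv_succ_succ.summable,
      hasSum_inv_succ_sub_inv_succ_succ.tsum_eq, ENNReal.ofReal_one]
    exact sub_nonneg.2 (inv_anti₀ (by positivity) (by linarith))
  have hinj : Function.Injective fun a : A => (a : ℕ) - 1 := fun a b h => by
    have := hA1 a a.2; have := hA1 b b.2
    exact Subtype.ext (by simp only at h; omega)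
  calc ∑' a : A, ENNReal.ofReal ((((a : ℕ) : ℝ) + 1) ^ 2)⁻¹
      ≤ ∑' a : A, ENNReal.ofReal (g ((a : ℕ) - 1)) := by
        refine ENNReal.tsum_le_tsum fun a => ENNReal.ofReal_le_ofReal ?_
        have ha : (1 : ℝ) ≤ (a : ℕ) := by exact_mod_cast hA1 a a.2
        have hga : g ((a : ℕ) - 1) = (((a : ℕ) : ℝ) * ((a : ℕ) + 1))⁻¹ := by
          simp only [g, Nat.cast_sub (hA1 a a.2), Nat.cast_one]
          rw [sub_add_cancel, show ((a : ℕ) : ℝ) - 1 + 2 = (a : ℕ) + 1 by ring]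
          field_simp
          ring
        rw [hga]
        gcongr
        nlinarith
    _ ≤ ∑' k, ENNReal.ofReal (g k) := ENNReal.tsum_comp_le_tsum_of_injective hinj _
    _ = 1 := hg

def qScale (B : ℝ) (l : List ℕ) : ℝ := B ^ (2 * l.length) * (qEven l : ℝ) ^ 2

section qScale

variable {B : ℝ}

lemma qScale_pos (hB : 0 < B) (l : List ℕ) : 0 < qScale B l := by
  have := qEven_pos l
  unfold qScale; positivity

lemma pow_le_qScale (hB : 0 < B) (l : List ℕ) : B ^ (2 * l.length) ≤ qScale B l :=
  le_mul_of_one_le_right (by positivity) (one_le_pow₀ (by exact_mod_cast qEven_pos l))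

lemma one_le_qScale (hB : 1 ≤ B) (l : List ℕ) : 1 ≤ qScale B l :=
  (one_le_pow₀ hB).trans (pow_le_qScale (by linarith) l)

lemma qScale_mul_le_qScale_append (hB : 0 < B) (l l' : List ℕ) :
    qScale B l * qScale B l' ≤ qScale B (l ++ l') := by
  have hq : (qEven l : ℝ) * qEven l' ≤ qEven (l ++ l') := by
    exact_mod_cast qEven_mul_le_qEven_append l l'
  calc qScale B l * qScale B l'
      = B ^ (2 * (l ++ l').length) * ((qEven l : ℝ) * qEven l') ^ 2 := by
        simp only [qScale, List.length_append]; ring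
    _ ≤ qScale B (l ++ l') := by unfold qScale; gcongr

lemma qScale_cons_le (hB : 0 < B) (a : ℕ) (l : List ℕ) :
    qScale B (a :: l) ≤ 4 * qScale B [a] * qScale B l := by
  have hq : (qEven (a :: l) : ℝ) ≤ 2 * ((a : ℝ) + 1) * qEven l := by
    exact_mod_cast qEven_cons_le a l
  calc qScale B (a :: l) ≤ B ^ (2 * (l.length + 1)) * (2 * ((a : ℝ) + 1) * qEven l) ^ 2 := by
        unfold qScale; rw [List.length_cons]; gcongr
    _ = 4 * qScale B [a] * qScale B l := by
        simp only [qScale, qEven_singleton, List.length_cons, List.length_nil]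
        push_cast
        ring

end qScale

section fnB

lemma fnB_eq_tsum_qScale (A : Set ℕ) (B : ℝ) (n : ℕ) (ρ : ℝ) :
    fnB A B n ρ =
      ∑' v : Fin n → A, ENNReal.ofReal (qScale B (List.ofFn fun i => (v i : ℕ)) ^ (-ρ)) := by
  simp [fnB, qScale]

lemma fnB_zero (A : Set ℕ) (B ρ : ℝ) : fnB A B 0 ρ = 1 := by
  simp [fnB, qEven]

lemma fnB_one (A : Set ℕ) (B ρ : ℝ) :
    fnB A B 1 ρ = ∑' a : A, ENNReal.ofReal (qScale B [(a : ℕ)] ^ (-ρ)) := by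
  rw [fnB_eq_tsum_qScale, ← (Equiv.funUnique (Fin 1) A).symm.tsum_eq]
  simp

variable {A : Set ℕ} {B : ℝ}

lemma fnB_add_le (hB : 0 < B) {ρ : ℝ} (hρ : 0 ≤ ρ) (m n : ℕ) :
    fnB A B (m + n) ρ ≤ fnB A B m ρ * fnB A B n ρ := by
  simp only [fnB_eq_tsum_qScale]
  rw [← (Fin.appendEquiv m n).tsum_eq, ENNReal.tsum_prod', ← ENNReal.tsum_mul_right]
  refine ENNReal.tsum_le_tsum fun v => ?_
  rw [← ENNReal.tsum_mul_left]
  refine ENNReal.tsum_le_tsum fun w => ?_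
  have hlist : (List.ofFn fun i => ((Fin.appendEquiv m n (v, w)) i : ℕ)) =
      (List.ofFn fun i => (v i : ℕ)) ++ List.ofFn fun i => (w i : ℕ) := by
    change List.ofFn (Subtype.val ∘ Fin.append v w) = _
    rw [← List.map_ofFn, List.ofFn_fin_append, List.map_append, List.map_ofFn, List.map_ofFn]
    rfl
  rw [hlist, ← ofReal_rpow_neg_mul (qScale_pos hB _).le (qScale_pos hB _).le]
  exact ofReal_rpow_neg_le_of_le (mul_pos (qScale_pos hB _) (qScale_pos hB _))
    (qScale_mul_le_qScale_append hB _ _) hρ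

lemma fnB_antitone (hB : 1 ≤ B) (n : ℕ) : Antitone (fnB A B n) := fun ρ ρ' h => by
  simp only [fnB_eq_tsum_qScale]
  exact ENNReal.tsum_le_tsum fun v => ENNReal.ofReal_le_ofReal
    (Real.rpow_le_rpow_of_exponent_le (one_le_qScale hB _) (neg_le_neg h))

lemma fnB_add_le_mul (hB : 0 < B) (n : ℕ) (ρ : ℝ) {δ : ℝ} (hδ : 0 ≤ δ) :
    fnB A B n (ρ + δ) ≤ ENNReal.ofReal ((B ^ (2 * n)) ^ (-δ)) * fnB A B n ρ := by
  simp only [fnB_eq_tsum_qScale]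
  rw [← ENNReal.tsum_mul_left]
  refine ENNReal.tsum_le_tsum fun v => ?_
  set l := List.ofFn fun i => (v i : ℕ)
  have hl := qScale_pos hB l
  rw [neg_add, Real.rpow_add hl, ENNReal.ofReal_mul (by positivity), mul_comm]
  refine mul_le_mul_left ?_ _
  simpa [l] using ofReal_rpow_neg_le_of_le (by positivity) (pow_le_qScale hB l) hδ

lemma fnB_le_one_at_one (hA1 : ∀ a ∈ A, 1 ≤ a) (hB : 1 ≤ B) (n : ℕ) : fnB A B n 1 ≤ 1 := by
  have hB0 : 0 < B := by linarith
  have h1 : fnB A B 1 1 ≤ 1 := by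
    refine le_trans ?_ (tsum_inv_succ_sq_le_one hA1)
    rw [fnB_one]
    refine ENNReal.tsum_le_tsum fun a => ENNReal.ofReal_le_ofReal ?_
    rw [Real.rpow_neg_one]
    refine inv_anti₀ (by positivity) ?_
    simpa [qScale, qEven_singleton] using le_mul_of_one_le_left (by positivity) (one_le_pow₀ hB)
  induction n with
  | zero => rw [fnB_zero]
  | succ n ih => exact (fnB_add_le hB0 zero_le_one n 1).trans (mul_le_one' ih h1)

lemma ofReal_mul_fnB_one_le (hB : 0 < B) {ρ : ℝ} (hρ : 0 ≤ ρ) {a₀ : ℕ} (ha₀ : a₀ ∈ A) (m : ℕ) :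
    ENNReal.ofReal ((4 * qScale B (List.replicate m a₀)) ^ (-ρ)) * fnB A B 1 ρ ≤
      fnB A B (m + 1) ρ := by
  set l₀ := List.replicate m a₀
  let pad : A → Fin (m + 1) → A := fun a => Fin.cons a fun _ => ⟨a₀, ha₀⟩
  have hpad : Function.Injective pad := fun a b h => by simpa [pad] using congrFun h 0
  have hlist : ∀ a : A, (List.ofFn fun i => (pad a i : ℕ)) = (a : ℕ) :: l₀ := fun a => by
    simp [pad, l₀, List.ofFn_succ, List.ofFn_const]
  rw [fnB_one, ← ENNReal.tsum_mul_left, fnB_eq_tsum_qScale]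
  refine le_trans ?_ (ENNReal.tsum_comp_le_tsum_of_injective hpad _)
  refine ENNReal.tsum_le_tsum fun a => ?_
  have h4 : 0 ≤ 4 * qScale B l₀ := by have := qScale_pos hB l₀; positivity
  rw [hlist, ← ofReal_rpow_neg_mul h4 (qScale_pos hB _).le]
  refine ofReal_rpow_neg_le_of_le (qScale_pos hB _) ?_ hρ
  linarith [qScale_cons_le hB (a : ℕ) l₀]

lemma fnB_one_ne_top (hA : A.Nonempty) (hB : 0 < B) {ρ : ℝ} (hρ : 0 ≤ ρ) {n : ℕ} (hn : 0 < n)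
    (h : fnB A B n ρ ≠ ∞) : fnB A B 1 ρ ≠ ∞ := by
  obtain ⟨a₀, ha₀⟩ := hA
  obtain ⟨m, rfl⟩ : ∃ m, n = m + 1 := ⟨n - 1, by omega⟩
  have hc : ENNReal.ofReal ((4 * qScale B (List.replicate m a₀)) ^ (-ρ)) ≠ 0 := by
    have := qScale_pos hB (List.replicate m a₀)
    exact (ENNReal.ofReal_pos.2 (by positivity)).ne'
  have := ne_top_of_le_ne_top h (ofReal_mul_fnB_one_le hB hρ ha₀ m)
  exact fun h1 => this (by rw [h1, ENNReal.mul_top hc])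

end fnB

section snB

variable {A : Set ℕ} {B : ℝ}

lemma snB_nonneg (A : Set ℕ) (B : ℝ) (n : ℕ) : 0 ≤ snB A B n :=
  Real.sInf_nonneg fun _ hρ => hρ.1

lemma snB_le_of_fnB_le_one {n : ℕ} {ρ : ℝ} (hρ : 0 ≤ ρ) (h : fnB A B n ρ ≤ 1) : snB A B n ≤ ρ :=
  csInf_le ⟨0, fun _ h => h.1⟩ ⟨hρ, h⟩

lemma snB_le_one (hA1 : ∀ a ∈ A, 1 ≤ a) (hB : 1 ≤ B) (n : ℕ) : snB A B n ≤ 1 :=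
  snB_le_of_fnB_le_one zero_le_one (fnB_le_one_at_one hA1 hB n)

lemma fnB_le_one_of_snB_lt (hA1 : ∀ a ∈ A, 1 ≤ a) (hB : 1 ≤ B) {n : ℕ} {ρ : ℝ}
    (h : snB A B n < ρ) : fnB A B n ρ ≤ 1 := by
  obtain ⟨ρ', hρ', hlt⟩ :=
    exists_lt_of_csInf_lt (s := {ρ | 0 ≤ ρ ∧ fnB A B n ρ ≤ 1})
      ⟨1, zero_le_one, fnB_le_one_at_one hA1 hB n⟩ h
  exact (fnB_antitone hB n hlt.le).trans hρ'.2

lemma eventually_snB_lt (hA : A.Nonempty) (hA1 : ∀ a ∈ A, 1 ≤ a) (hB : 1 < B) {n : ℕ}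
    (hn : 0 < n) {t : ℝ} (ht : snB A B n < t) : ∀ᶠ m in atTop, snB A B m < t := by
  have hB0 : 0 < B := by linarith
  set δ := (t - snB A B n) / 3
  have hδ : 0 < δ := by simp only [δ]; linarith
  set ρ := snB A B n + δ
  have hρ : 0 ≤ ρ := by have := snB_nonneg A B n; simp only [ρ]; linarith
  have hlt : fnB A B n (ρ + δ) < 1 :=
    calc fnB A B n (ρ + δ) ≤ ENNReal.ofReal ((B ^ (2 * n)) ^ (-δ)) * fnB A B n ρ :=
          fnB_add_le_mul hB0 n ρ hδ.le
      _ ≤ ENNReal.ofReal ((B ^ (2 * n)) ^ (-δ)) * 1 :=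
          mul_le_mul_right (fnB_le_one_of_snB_lt hA1 hB.le (lt_add_of_pos_right _ hδ)) _
      _ < 1 := by
          rw [mul_one, ENNReal.ofReal_lt_one]
          exact Real.rpow_lt_one_of_one_lt_of_neg (one_lt_pow₀ hB (by omega)) (by linarith)
  have hfin : fnB A B 1 (ρ + δ) ≠ ∞ :=
    fnB_one_ne_top hA hB0 (by linarith) hn (hlt.trans ENNReal.one_lt_top).ne
  have hlim := tendsto_zero_of_submultiplicative (u := fun m => fnB A B m (ρ + δ))
    (fnB_add_le hB0 (by linarith)) (fnB_zero A B _).le hfin hn hlt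
  filter_upwards [hlim.eventually (Iic_mem_nhds zero_lt_one)] with m hm
  exact (snB_le_of_fnB_le_one (by linarith) hm).trans_lt (by simp only [ρ, δ]; linarith)

end snB

/-- Lemma 2.5: for any nonempty set `𝒜` of positive integers and `B > 1`, the limit
`s_B(𝒜) = lim_n s_{n,B}(𝒜)` exists and lies in `[0, 1]`. -/
theorem sB_limit_exists (A : Set ℕ) (hA : A.Nonempty) (hA1 : ∀ a ∈ A, 1 ≤ a)
    (B : ℝ) (hB : 1 < B) :
    ∃ s : ℝ, 0 ≤ s ∧ s ≤ 1 ∧ Tendsto (fun n => snB A B n) atTop (nhds s) := by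
  have hbdd : BddBelow (Set.range fun n => snB A B (n + 1)) :=
    ⟨0, by rintro _ ⟨n, rfl⟩; exact snB_nonneg A B _⟩
  refine ⟨⨅ n, snB A B (n + 1), le_ciInf fun n => snB_nonneg A B _,
    (ciInf_le hbdd 0).trans (snB_le_one hA1 hB.le 1), ?_⟩
  rw [← tendsto_add_atTop_iff_nat 1]
  refine tendsto_order.2 ⟨fun a ha => .of_forall fun n => ha.trans_le (ciInf_le hbdd n),
    fun a ha => ?_⟩
  obtain ⟨n, hn⟩ := exists_lt_of_ciInf_lt ha
  exact (tendsto_add_atTop_nat 1).eventually (eventually_snB_lt hA hA1 hB n.succ_pos hn)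
end

section
/- Let b > 1 and c > 1 be real numbers and let x ∈ E(b,c) = {x ∈ I_even : a_{2n}(x) ≥ c^{b^{2n}} for infinitely many n}. Then for every real number d with 1 < d < b, the inequality q_{2n+2}(x) > max{ q_{2n}(x)^{d²}, c^{d^{2n+2}} } holds for infinitely many n. -/
open Filter Topology MeasureTheory

/-!
Along an irrational `x ∈ (0,1)` all partial quotients are `≥ 1`, so `q_{2n} ≥ a_{2n}`, and
`a_{2n} ≥ c^{b^{2n}}` infinitely often. If the conclusion failed from some index on, then
`u_n = log q_{2n} / d^{2n}` would satisfy `u_{n+1} ≤ max (u_n, log c)`, hence be bounded, whereas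
`u_n ≥ (b/d)^{2n} log c` infinitely often.
-/

open Real Set

theorem le_max_of_succ_le_max {α : Type*} [LinearOrder α] {u : ℕ → α} {C : α} {N : ℕ}
    (h : ∀ n ≥ N, u (n + 1) ≤ max (u n) C) : ∀ n ≥ N, u n ≤ max (u N) C := by
  intro n hn
  induction n, hn using Nat.le_induction with
  | base => exact le_max_left _ _
  | succ n hn ih => exact (h n hn).trans (max_le ih (le_max_right _ _))

theorem log_div_pow_succ_le_max {q q' c e : ℝ} (k : ℕ) (hq : 0 < q) (hq' : 0 < q')
    (hc : 0 < c) (he : 0 < e) (h : q' ≤ max (q ^ e) (c ^ (e ^ (k + 1)))) :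
    log q' / e ^ (k + 1) ≤ max (log q / e ^ k) (log c) := by
  have hlog : log q' ≤ max (e * log q) (e ^ (k + 1) * log c) := by
    calc log q' ≤ log (max (q ^ e) (c ^ (e ^ (k + 1)))) := log_le_log hq' h
      _ = max (log (q ^ e)) (log (c ^ (e ^ (k + 1)))) :=
          (strictMonoOn_log.monotoneOn).map_max (rpow_pos_of_pos hq e)
            (rpow_pos_of_pos hc _)
      _ = max (e * log q) (e ^ (k + 1) * log c) := by rw [log_rpow hq, log_rpow hc]
  have hrescale : log q / e ^ k * e ^ (k + 1) = e * log q := by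
    rw [pow_succ]
    field_simp
  rw [div_le_iff₀ (pow_pos he _), max_mul_of_nonneg _ _ (pow_pos he _).le, hrescale,
    mul_comm (log c)]
  exact hlog

theorem frequently_max_rpow_lt_succ {Q : ℕ → ℝ} {c e β : ℝ} (hQ : ∀ n, 0 < Q n) (hc : 1 < c)
    (he : 0 < e) (heβ : e < β) (hfreq : ∃ᶠ n in atTop, c ^ (β ^ n) ≤ Q n) :
    ∃ᶠ n in atTop, max (Q n ^ e) (c ^ (e ^ (n + 1))) < Q (n + 1) := by
  by_contra hcon
  simp only [not_frequently, not_lt] at hcon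
  set u : ℕ → ℝ := fun n => log (Q n) / e ^ n
  have hc0 : 0 < c := one_pos.trans hc
  obtain ⟨N, hstep⟩ := eventually_atTop.1 hcon
  have hbdd : ∀ n ≥ N, u n ≤ max (u N) (log c) := le_max_of_succ_le_max fun n hn =>
    log_div_pow_succ_le_max n (hQ n) (hQ (n + 1)) hc0 he (hstep n hn)
  have hlarge : ∃ᶠ n in atTop, (β / e) ^ n * log c ≤ u n := hfreq.mono fun n hn => by
    rw [div_pow, div_mul_eq_mul_div, div_le_div_iff_of_pos_right (pow_pos he n),
      ← log_rpow hc0]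
    exact log_le_log (rpow_pos_of_pos hc0 _) hn
  have htend : Tendsto (fun n : ℕ => (β / e) ^ n * log c) atTop atTop :=
    (tendsto_pow_atTop_atTop_of_one_lt ((one_lt_div he).2 heβ)).atTop_mul_const (log_pos hc)
  obtain ⟨n, hn, hgt, hNn⟩ := (hlarge.and_eventually
    ((htend.eventually_gt_atTop (max (u N) (log c))).and (eventually_ge_atTop N))).exists
  linarith [hbdd n hNn]

section ContinuedFractions

variable {x : ℝ}

theorem Irrational.gaussMap (h : Irrational x) : Irrational (gaussMap x) := by
  rw [_root_.gaussMap, Int.fract, one_div]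
  exact h.inv.sub_intCast _

theorem Irrational.gaussMap_iterate (h : Irrational x) (n : ℕ) :
    Irrational (_root_.gaussMap^[n] x) := by
  induction n with
  | zero => exact h
  | succ n ih => rw [Function.iterate_succ_apply']; exact ih.gaussMap

theorem gaussMap_mem_Ioo (h : Irrational x) : gaussMap x ∈ Ioo 0 1 :=
  ⟨(Int.fract_nonneg _).lt_of_ne h.gaussMap.ne_zero.symm, Int.fract_lt_one _⟩

theorem gaussMap_iterate_mem_Ioo (hx : x ∈ Ioo 0 1) (h : Irrational x) :
    ∀ n, gaussMap^[n] x ∈ Ioo 0 1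
  | 0 => hx
  | n + 1 => by
    rw [Function.iterate_succ_apply']
    exact gaussMap_mem_Ioo (Irrational.gaussMap_iterate h n)

theorem one_le_cfa (hx : x ∈ Ioo 0 1) (h : Irrational x) (n : ℕ) : 1 ≤ cfa n x := by
  obtain ⟨hpos, hlt⟩ := gaussMap_iterate_mem_Ioo hx h (n - 1)
  exact Int.le_floor.2 (by simpa using one_le_one_div hpos hlt.le)

theorem one_le_qden (hx : x ∈ Ioo 0 1) (h : Irrational x) : ∀ n, 1 ≤ qden x n
  | 0 => le_rfl
  | 1 => one_le_cfa hx h 1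
  | n + 2 => by
    have := one_le_cfa hx h (n + 2)
    have := one_le_qden hx h (n + 1)
    have := one_le_qden hx h n
    rw [qden]
    nlinarith

theorem cfa_le_qden (hx : x ∈ Ioo 0 1) (h : Irrational x) :
    ∀ {n : ℕ}, n ≠ 0 → cfa n x ≤ qden x n
  | 1, _ => le_rfl
  | n + 2, _ => by
    have := one_le_cfa hx h (n + 2)
    have := one_le_qden hx h (n + 1)
    have := one_le_qden hx h n
    rw [qden]
    nlinarith

end ContinuedFractions

theorem qden_growth_of_mem_Ebc_general (b c : ℝ) (hc : 1 < c)
    (d : ℝ) (hd1 : 1 < d) (hdb : d < b) (x : ℝ)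
    (hx : x ∈ Ieven ∧ ∃ᶠ n in atTop, c ^ (b ^ (2 * n)) ≤ (cfa (2 * n) x : ℝ)) :
    ∃ᶠ n in atTop,
      max ((qden x (2 * n) : ℝ) ^ (d ^ 2)) (c ^ ((d : ℝ) ^ (2 * n + 2))) <
        (qden x (2 * n + 2) : ℝ) := by
  obtain ⟨⟨⟨hx0, hx1⟩, hirr, -⟩, hfreq⟩ := hx
  have hxI : x ∈ Ioo 0 1 := ⟨hx0.lt_of_ne hirr.ne_zero.symm, hx1⟩
  have hd0 : 0 < d := one_pos.trans hd1
  have hQ : ∀ n, (0 : ℝ) < qden x (2 * n) := fun n => by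
    exact_mod_cast one_pos.trans_le (one_le_qden hxI hirr (2 * n))
  have hQfreq : ∃ᶠ n in atTop, c ^ ((b ^ 2) ^ n) ≤ (qden x (2 * n) : ℝ) :=
    (hfreq.and_eventually (eventually_ge_atTop 1)).mono fun n ⟨hn, h1⟩ => by
      rw [← pow_mul]
      exact hn.trans (by exact_mod_cast cfa_le_qden hxI hirr (by omega))
  refine (frequently_max_rpow_lt_succ hQ hc (pow_pos hd0 2)
    (pow_lt_pow_left₀ hdb hd0.le two_ne_zero) hQfreq).mono fun n hn => ?_
  rwa [show 2 * n + 2 = 2 * (n + 1) by ring, pow_mul]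

/-- Lemma 6.1: if `x ∈ E(b,c)` then for any `1 < d < b`,
`q_{2n+2}(x) > max {q_{2n}(x)^{d²}, c^{d^{2n+2}}}` for infinitely many `n`. -/
theorem qden_growth_of_mem_Ebc (b c : ℝ) (hb : 1 < b) (hc : 1 < c)
    (d : ℝ) (hd1 : 1 < d) (hdb : d < b) (x : ℝ)
    (hx : x ∈ Ieven ∧ ∃ᶠ n in atTop, c ^ (b ^ (2 * n)) ≤ (cfa (2 * n) x : ℝ)) :
    ∃ᶠ n in atTop,
      max ((qden x (2 * n) : ℝ) ^ (d ^ 2)) (c ^ ((d : ℝ) ^ (2 * n + 2))) <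
        (qden x (2 * n + 2) : ℝ) :=
  qden_growth_of_mem_Ebc_general b c hc d hd1 hdb x hx
end
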